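/- If X is a metric space such that every pair of distinct points can be separated by a closed subset L with small inductive dimension ind(L) ≤ D−1, then every compact subset of X has small inductive dimension at most D. -/
import Mathlib


universe u

/-- `IndLt n X` means the small inductive dimension of `X` is at most `n - 1`
(so `IndLt 0 X` says `ind X ≤ -1`, i.e. `X` is empty). -/
def IndLt : ℕ → (X : Type u) → [TopologicalSpace X] → Prop
  | 0, X, _ => IsEmpty X
  | (n+1), X, _ => ∀ (p : X) (V : Set X), IsOpen V → p ∈ V →
      ∃ U : Set X, IsOpen U ∧ p ∈ U ∧ U ⊆ V ∧ IndLt n ↥(frontier U)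

/-- `L` separates `x` from `y`: `L` is closed and the complement of `L` is a disjoint
union of open sets, one containing `x`, the other containing `y`. -/
def SeparatesPoints {X : Type u} [TopologicalSpace X] (L : Set X) (x y : X) : Prop :=
  IsClosed L ∧ ∃ U V : Set X, IsOpen U ∧ IsOpen V ∧ x ∈ U ∧ y ∈ V ∧
    U ∩ V = ∅ ∧ U ∪ V = Lᶜ

open Set Topology EMetric Classical

section GoodDef
variable {X : Type u} [TopologicalSpace X]

/-- Ambient-set version of a small-inductive-dimension bound: `Good n S` says that
`ind S ≤ n - 1`, witnessed by ambient open sets whose frontiers trace small sets on `S`. -/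
def Good : ℕ → Set X → Prop
  | 0, S => S = ∅
  | (n+1), S => ∀ x ∈ S, ∀ W : Set X, IsOpen W → x ∈ W →
      ∃ H : Set X, IsOpen H ∧ x ∈ H ∧ closure H ⊆ W ∧ Good n (S ∩ frontier H)

theorem Good.mono : ∀ {n : ℕ} {S T : Set X}, Good n T → S ⊆ T → Good n S
  | 0, S, T, hT, hST => by
      simp only [Good] at hT ⊢; exact eq_empty_of_subset_empty (hT ▸ hST)
  | (n+1), S, T, hT, hST => by
      intro x hx W hW hxW
      obtain ⟨H, h1, h2, h3, h4⟩ := hT x (hST hx) W hW hxW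
      exact ⟨H, h1, h2, h3, h4.mono (inter_subset_inter_left _ hST)⟩

theorem good_empty : ∀ n : ℕ, Good n (∅ : Set X)
  | 0 => rfl
  | (_+1) => fun x hx => absurd hx (notMem_empty x)

end GoodDef

theorem indLt_of_embedding : ∀ (n : ℕ) {A B : Type u} [TopologicalSpace A] [TopologicalSpace B]
    (f : A → B), Topology.IsEmbedding f → IndLt n B → IndLt n A
  | 0, A, B, _, _, f, hf, hB => by
      simp only [IndLt] at hB ⊢
      exact ⟨fun a => hB.elim' (f a)⟩
  | (n+1), A, B, _, _, f, hf, hB => by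
      intro p V hV hpV
      obtain ⟨W, hW, hVW⟩ := isOpen_induced_iff.1 (hf.eq_induced ▸ hV : IsOpen[TopologicalSpace.induced f _] V)
      obtain ⟨U', hU', hfU', hU'W, hind⟩ := hB (f p) W hW (by rw [← hVW] at hpV; exact hpV)
      refine ⟨f ⁻¹' U', hU'.preimage hf.continuous, hfU', ?_, ?_⟩
      · rw [← hVW]; exact preimage_mono hU'W
      · have hfr : frontier (f ⁻¹' U') ⊆ f ⁻¹' frontier U' := by
          intro x hx
          have h1 : x ∈ closure (f ⁻¹' U') := hx.1
          have h2 : f x ∈ closure U' :=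
            (Continuous.closure_preimage_subset hf.continuous U') h1
          refine ⟨h2, fun hmem : f x ∈ interior U' => ?_⟩
          exact hx.2 (preimage_interior_subset_interior_preimage hf.continuous hmem)
        set g : ↥(frontier (f ⁻¹' U')) → ↥(frontier U') := fun x => ⟨f x.1, hfr x.2⟩ with hg
        have hgemb : Topology.IsEmbedding g := by
          have hcomp : (Subtype.val : ↥(frontier U') → B) ∘ g
              = f ∘ (Subtype.val : ↥(frontier (f ⁻¹' U')) → A) := rfl
          refine Topology.IsEmbedding.of_comp ?_ continuous_subtype_val ?_
          · exact Continuous.subtype_mk (hf.continuous.comp continuous_subtype_val) _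
          · rw [hcomp]; exact hf.comp Topology.IsEmbedding.subtypeVal
        exact indLt_of_embedding n g hgemb hind


section ImageVal
variable {X : Type u} [TopologicalSpace X]

theorem indLt_image_val_iff {n : ℕ} {Z : Set X} {A : Set ↥Z} :
    IndLt n ↥(Subtype.val '' A) ↔ IndLt n ↥A := by
  constructor
  · intro h
    refine indLt_of_embedding n (fun a => ⟨a.1.1, ⟨a.1, a.2, rfl⟩⟩ :
      ↥A → ↥(Subtype.val '' A)) ?_ h
    refine Topology.IsEmbedding.of_comp ?_ continuous_subtype_val ?_
    · exact Continuous.subtype_mk (continuous_subtype_val.comp continuous_subtype_val) _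
    · have : ((Subtype.val : ↥(Subtype.val '' A) → X) ∘ fun (a : ↥A) => (⟨a.1.1, ⟨a.1, a.2, rfl⟩⟩ : ↥(Subtype.val '' A)))
          = (Subtype.val : ↥Z → X) ∘ (Subtype.val : ↥A → ↥Z) := rfl
      rw [this]
      exact Topology.IsEmbedding.subtypeVal.comp Topology.IsEmbedding.subtypeVal
  · intro h
    have hmem1 : ∀ b : ↥(Subtype.val '' A), b.1 ∈ Z := by
      rintro ⟨b, a, ha, rfl⟩; exact a.2
    have hmem2 : ∀ b : ↥(Subtype.val '' A), (⟨b.1, hmem1 b⟩ : ↥Z) ∈ A := by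
      rintro ⟨b, a, ha, rfl⟩; exact ha
    set g : ↥(Subtype.val '' A) → ↥A := fun b => ⟨⟨b.1, hmem1 b⟩, hmem2 b⟩ with hg
    refine indLt_of_embedding n g ?_ h
    have hcont : Continuous g := by
      refine Continuous.subtype_mk (Continuous.subtype_mk continuous_subtype_val _) _
    refine Topology.IsEmbedding.of_comp hcont continuous_subtype_val ?_
    refine Topology.IsEmbedding.of_comp
      (continuous_subtype_val.comp hcont) continuous_subtype_val ?_
    have : (Subtype.val : ↥Z → X) ∘ (Subtype.val : ↥A → ↥Z) ∘ g
        = (Subtype.val : ↥(Subtype.val '' A) → X) := rfl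
    rw [this]
    exact Topology.IsEmbedding.subtypeVal

end ImageVal


section Metric1
variable {X : Type u} [MetricSpace X]

/-- Separated sets in a metric space are contained in disjoint open sets. -/
theorem separated_disjoint_opens {M N : Set X}
    (h1 : closure M ∩ N = ∅) (h2 : M ∩ closure N = ∅) :
    ∃ U V : Set X, IsOpen U ∧ IsOpen V ∧ M ⊆ U ∧ N ⊆ V ∧ U ∩ V = ∅ := by
  refine ⟨{x | infEdist x M < infEdist x N}, {x | infEdist x N < infEdist x M},
    isOpen_lt continuous_infEdist continuous_infEdist,
    isOpen_lt continuous_infEdist continuous_infEdist, ?_, ?_, ?_⟩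
  · intro m hm
    have hz : infEdist m M = 0 := infEdist_zero_of_mem hm
    have hnz : infEdist m N ≠ 0 := by
      intro h0
      have : m ∈ closure N := mem_closure_iff_infEdist_zero.2 h0
      exact absurd (mem_inter hm this) (by rw [h2]; exact notMem_empty m)
    simpa [hz] using pos_iff_ne_zero.2 hnz
  · intro p hp
    have hz : infEdist p N = 0 := infEdist_zero_of_mem hp
    have hnz : infEdist p M ≠ 0 := by
      intro h0
      have : p ∈ closure M := mem_closure_iff_infEdist_zero.2 h0
      exact absurd (mem_inter this hp) (by rw [h1]; exact notMem_empty p)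
    simpa [hz] using pos_iff_ne_zero.2 hnz
  · apply eq_empty_iff_forall_notMem.2
    rintro x ⟨(h1 : infEdist x M < infEdist x N), (h2 : infEdist x N < infEdist x M)⟩
    exact lt_asymm h1 h2

/-- Transfer lemma: a relatively open subset of `Z` around `x` can be thickened to an
ambient open set whose frontier meets `Z` only in the relative frontier of `S`. -/
theorem transfer_open {Z S B₀ : Set X} {G₀ : Set X} (hG₀ : IsOpen G₀) (hSG : S = Z ∩ G₀)
    {x : X} (hx : x ∈ S) (hB₀ : IsOpen B₀) (hSB : S ⊆ B₀) :
    ∃ H : Set X, IsOpen H ∧ x ∈ H ∧ H ⊆ B₀ ∧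
      Z ∩ frontier H ⊆ (Z ∩ closure S) \ S := by
  have hsep1 : closure S ∩ (Z \ closure S) = ∅ :=
    eq_empty_iff_forall_notMem.2 (fun y ⟨h1, h2⟩ => h2.2 h1)
  have hsep2 : S ∩ closure (Z \ closure S) = ∅ := by
    apply eq_empty_iff_forall_notMem.2
    rintro y ⟨h1, h2⟩
    have hyG : y ∈ G₀ := by
      have : y ∈ Z ∩ G₀ := hSG ▸ h1
      exact this.2
    obtain ⟨z, hzG, hzZ, hzns⟩ := mem_closure_iff.1 h2 G₀ hG₀ hyG
    exact hzns (subset_closure (by rw [hSG]; exact ⟨hzZ, hzG⟩))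
  obtain ⟨U, V, hU, hV, hSU, hNV, hUV⟩ := separated_disjoint_opens hsep1 hsep2
  refine ⟨U ∩ B₀, hU.inter hB₀, ⟨hSU hx, hSB hx⟩, inter_subset_right, ?_⟩
  rintro z ⟨hzZ, hzf⟩
  have hznH : z ∉ U ∩ B₀ := fun h => hzf.2 (((hU.inter hB₀).interior_eq).symm ▸ h)
  have hzcl : z ∈ closure (U ∩ B₀) := hzf.1
  have hzclU : z ∈ closure U := closure_mono inter_subset_left hzcl
  have hznV : z ∉ V := by
    intro hzV
    obtain ⟨w, hw1, hw2⟩ := mem_closure_iff.1 hzclU V hV hzV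
    exact absurd (mem_inter hw2 hw1) (by rw [hUV]; exact notMem_empty w)
  have hzclS : z ∈ closure S := by
    by_contra hns
    exact hznV (hNV ⟨hzZ, hns⟩)
  refine ⟨⟨hzZ, hzclS⟩, fun hzS => hznH ⟨hSU hzS, hSB hzS⟩⟩


end Metric1

theorem good_of_indLt : ∀ (n : ℕ) {X : Type u} [MetricSpace X] (Z : Set X),
    IndLt n ↥Z → Good n Z
  | 0, X, _, Z, h => by
      simp only [IndLt] at h
      simpa only [Good] using Set.isEmpty_coe_sort.1 h
  | (n+1), X, _, Z, h => by
      intro x hx W hW hxW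
      obtain ⟨ε, hε, hball⟩ := Metric.isOpen_iff.1 hW x hxW
      set B := Metric.ball x (ε/2) with hB
      have hBW : closure B ⊆ W := by
        refine (Metric.closure_ball_subset_closedBall.trans ?_).trans hball
        exact Metric.closedBall_subset_ball (by linarith)
      have hxB : x ∈ B := Metric.mem_ball_self (by linarith)
      obtain ⟨U, hUo, hpU, hUV, hind⟩ := h ⟨x, hx⟩ (Subtype.val ⁻¹' B)
        (Metric.isOpen_ball.preimage continuous_subtype_val) hxB
      obtain ⟨G₀, hG₀, hG₀U⟩ := isOpen_induced_iff.1 hUo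
      set S := (Subtype.val '' U : Set X) with hS
      have hSG : S = Z ∩ G₀ := by rw [hS, ← hG₀U, Subtype.image_preimage_coe]
      have hxS : x ∈ S := ⟨⟨x, hx⟩, hpU, rfl⟩
      have hSB : S ⊆ B := by rintro _ ⟨a, ha, rfl⟩; exact hUV ha
      obtain ⟨H, hHo, hxH, hHB, hfr⟩ := transfer_open hG₀ hSG hxS Metric.isOpen_ball hSB
      refine ⟨H, hHo, hxH, (closure_mono hHB).trans hBW, ?_⟩
      have himg : Subtype.val '' (frontier U) = (Z ∩ closure S) \ S := by
        rw [hUo.frontier_eq]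
        ext y
        constructor
        · rintro ⟨a, ⟨hacl, hanU⟩, rfl⟩
          refine ⟨⟨a.2, closure_subtype.1 hacl⟩, ?_⟩
          rintro ⟨b, hb, hba⟩
          exact hanU ((Subtype.ext hba : b = a) ▸ hb)
        · rintro ⟨⟨hyZ, hycl⟩, hynS⟩
          exact ⟨⟨y, hyZ⟩, ⟨closure_subtype.2 hycl, fun hU' => hynS ⟨⟨y, hyZ⟩, hU', rfl⟩⟩, rfl⟩
      have hgood : Good n ((Z ∩ closure S) \ S) := by
        rw [← himg]
        exact good_of_indLt n _ (indLt_image_val_iff.2 hind)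
      exact hgood.mono hfr

theorem indLt_of_good : ∀ (n : ℕ) {X : Type u} [MetricSpace X] {S : Set X},
    Good n S → IndLt n ↥S
  | 0, X, _, S, h => by
      simp only [Good] at h
      simp only [IndLt]
      exact Set.isEmpty_coe_sort.2 h
  | (n+1), X, _, S, h => by
      intro p V hV hpV
      obtain ⟨W₀, hW₀, hW₀V⟩ := isOpen_induced_iff.1 hV
      obtain ⟨H, hHo, hxH, hclHW, hgood⟩ := h p.1 p.2 W₀ hW₀
        (by rw [← hW₀V] at hpV; exact hpV)
      refine ⟨Subtype.val ⁻¹' H, hHo.preimage continuous_subtype_val, hxH, ?_, ?_⟩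
      · rw [← hW₀V]; exact preimage_mono (subset_closure.trans hclHW)
      · have hfr : frontier (Subtype.val ⁻¹' H : Set ↥S) ⊆ Subtype.val ⁻¹' frontier H := by
          intro z hz
          refine ⟨Continuous.closure_preimage_subset continuous_subtype_val H hz.1, ?_⟩
          exact fun hint => hz.2 (preimage_interior_subset_interior_preimage
            continuous_subtype_val hint)
        have himg : Subtype.val '' (frontier (Subtype.val ⁻¹' H : Set ↥S)) ⊆ S ∩ frontier H := by
          rintro _ ⟨a, ha, rfl⟩; exact ⟨a.2, hfr ha⟩
        exact indLt_image_val_iff.1 (indLt_of_good n (hgood.mono himg))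


/-- Transfer of `Good` between a subspace and the ambient space. -/
theorem good_subtype_iff {X : Type u} [MetricSpace X] {Z : Set X} {n : ℕ} {A : Set ↥Z} :
    Good n A ↔ Good n (Subtype.val '' A) :=
  ⟨fun h => good_of_indLt n _ (indLt_image_val_iff.2 (indLt_of_good n h)),
   fun h => good_of_indLt n _ (indLt_image_val_iff.1 (indLt_of_good n h))⟩

section Metric2
variable {X : Type u} [MetricSpace X]


theorem exists_opens_closure_disjoint {A B : Set X} (hA : IsClosed A) (hB : IsClosed B)
    (hAB : Disjoint A B) :
    ∃ U V : Set X, IsOpen U ∧ IsOpen V ∧ A ⊆ U ∧ B ⊆ V ∧ closure U ∩ closure V = ∅ := by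
  obtain ⟨P, Q, hP, hQ, hAP, hBQ, hPQ⟩ := NormalSpace.normal A B hA hB hAB
  obtain ⟨U, hU, hAU, hUP⟩ := normal_exists_closure_subset hA hP hAP
  obtain ⟨V, hV, hBV, hVQ⟩ := normal_exists_closure_subset hB hQ hBQ
  exact ⟨U, V, hU, hV, hAU, hBV, by
    apply eq_empty_iff_forall_notMem.2
    rintro x ⟨h1, h2⟩
    exact hPQ.ne_of_mem (hUP h1) (hVQ h2) rfl⟩

theorem zsep [SecondCountableTopology X] {Z A B : Set X}
    (hZ : Good 1 Z) (hA : IsClosed A) (hB : IsClosed B) (hAB : Disjoint A B) :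
    ∃ U V : Set X, IsOpen U ∧ IsOpen V ∧ U ∩ V = ∅ ∧ A ⊆ U ∧ B ⊆ V ∧ Z ⊆ U ∪ V := by
  obtain ⟨U₀, V₀, hU₀, hV₀, hAU₀, hBV₀, hc₀⟩ := exists_opens_closure_disjoint hA hB hAB
  rcases Set.eq_empty_or_nonempty Z with hZe | hZne
  · refine ⟨U₀, V₀, hU₀, hV₀, ?_, hAU₀, hBV₀, by rw [hZe]; exact empty_subset _⟩
    apply eq_empty_iff_forall_notMem.2
    rintro x ⟨h1, h2⟩
    exact eq_empty_iff_forall_notMem.1 hc₀ x ⟨subset_closure h1, subset_closure h2⟩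
  -- choose basic clopen-trace neighborhoods
  have hH : ∀ z : ↥Z, ∃ H : Set X, IsOpen H ∧ z.1 ∈ H ∧ Z ∩ frontier H = ∅ ∧
      ((z.1 ∉ closure V₀ ∧ closure H ∩ closure V₀ = ∅) ∨
       (z.1 ∈ closure V₀ ∧ closure H ∩ closure U₀ = ∅)) := by
    intro z
    by_cases hzv : z.1 ∈ closure V₀
    · have hzu : z.1 ∈ (closure U₀)ᶜ := fun h =>
        eq_empty_iff_forall_notMem.1 hc₀ z.1 ⟨h, hzv⟩
      obtain ⟨H, h1, h2, h3, h4⟩ := hZ z.1 z.2 (closure U₀)ᶜ isClosed_closure.isOpen_compl hzu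
      refine ⟨H, h1, h2, h4, Or.inr ⟨hzv, ?_⟩⟩
      apply eq_empty_iff_forall_notMem.2; rintro x ⟨hx1, hx2⟩; exact h3 hx1 hx2
    · obtain ⟨H, h1, h2, h3, h4⟩ := hZ z.1 z.2 (closure V₀)ᶜ isClosed_closure.isOpen_compl hzv
      refine ⟨H, h1, h2, h4, Or.inl ⟨hzv, ?_⟩⟩
      apply eq_empty_iff_forall_notMem.2; rintro x ⟨hx1, hx2⟩; exact h3 hx1 hx2
  choose H hHo hHm hHfr hHside using hH
  obtain ⟨s, hsc, hsU⟩ := TopologicalSpace.isOpen_iUnion_countable H hHo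
  have hZcover : Z ⊆ ⋃ z ∈ s, H z := by
    intro x hx
    rw [hsU]
    exact mem_iUnion.2 ⟨⟨x, hx⟩, hHm _⟩
  have hsne : s.Nonempty := by
    obtain ⟨x, hx⟩ := hZne
    obtain ⟨z, hz, _⟩ := mem_iUnion₂.1 (hZcover hx)
    exact ⟨z, hz⟩
  obtain ⟨f, hf⟩ := Set.Countable.exists_eq_range hsc hsne
  set Hf : ℕ → Set X := fun i => H (f i) with hHf
  have hZcov : Z ⊆ ⋃ i, Hf i := by
    intro x hx
    obtain ⟨z, hz, hxz⟩ := mem_iUnion₂.1 (hZcover hx)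
    rw [hf] at hz; obtain ⟨i, rfl⟩ := hz
    exact mem_iUnion.2 ⟨i, hxz⟩
  have c1 : ∀ i, Z ∩ closure (Hf i) = Z ∩ Hf i := by
    intro i
    apply Subset.antisymm
    · rintro y ⟨hy1, hy2⟩
      by_cases hyH : y ∈ Hf i
      · exact ⟨hy1, hyH⟩
      · exact absurd ⟨hy1, hy2, fun h => hyH (interior_subset h)⟩
          (eq_empty_iff_forall_notMem.1 (hHfr (f i)) y)
    · exact inter_subset_inter_right _ subset_closure
  set goodU : ℕ → Prop := fun i => (f i).1 ∉ closure V₀ with hgoodU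
  set P : ℕ → Set X := fun i => (Z ∩ Hf i) \ ⋃ j ∈ Finset.range i, Hf j with hP
  set E : Set X := ⋃ (i) (_ : goodU i), P i with hE
  set F : Set X := ⋃ (i) (_ : ¬ goodU i), P i with hF
  have hPZ : ∀ i, P i ⊆ Z := fun i => (diff_subset).trans inter_subset_left
  have hPH : ∀ i, P i ⊆ Hf i := fun i => (diff_subset).trans inter_subset_right
  have hsideU : ∀ i, goodU i → closure (Hf i) ∩ closure V₀ = ∅ := by
    intro i hi; rcases hHside (f i) with ⟨_, h⟩ | ⟨h, _⟩
    · exact h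
    · exact absurd h hi
  have hsideV : ∀ i, ¬ goodU i → closure (Hf i) ∩ closure U₀ = ∅ := by
    intro i hi; rcases hHside (f i) with ⟨h, _⟩ | ⟨_, h⟩
    · exact absurd h (by simpa [hgoodU] using hi)
    · exact h
  have hZEF : Z ⊆ E ∪ F := by
    intro x hx
    have hex : ∃ i, x ∈ Hf i := mem_iUnion.1 (hZcov hx)
    set i₀ := Nat.find hex with hi₀
    have hxP : x ∈ P i₀ := by
      refine ⟨⟨hx, Nat.find_spec hex⟩, ?_⟩
      intro hmem
      obtain ⟨j, hj, hxj⟩ := mem_iUnion₂.1 hmem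
      exact Nat.find_min hex (Finset.mem_range.1 hj) hxj
    by_cases hg : goodU i₀
    · exact Or.inl (mem_iUnion₂.2 ⟨i₀, hg, hxP⟩)
    · exact Or.inr (mem_iUnion₂.2 ⟨i₀, hg, hxP⟩)
  have hEV₀ : E ∩ closure V₀ = ∅ := by
    apply eq_empty_iff_forall_notMem.2
    rintro x ⟨hx1, hx2⟩
    obtain ⟨i, hgi, hxi⟩ := mem_iUnion₂.1 hx1
    exact eq_empty_iff_forall_notMem.1 (hsideU i hgi) x ⟨subset_closure (hPH i hxi), hx2⟩
  have hFU₀ : F ∩ closure U₀ = ∅ := by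
    apply eq_empty_iff_forall_notMem.2
    rintro x ⟨hx1, hx2⟩
    obtain ⟨i, hgi, hxi⟩ := mem_iUnion₂.1 hx1
    exact eq_empty_iff_forall_notMem.1 (hsideV i hgi) x ⟨subset_closure (hPH i hxi), hx2⟩
  -- the key separation of E and F
  have key : ∀ (σ : ℕ → Prop) (x : X), x ∈ (⋃ (i) (_ : σ i), P i) →
      x ∉ closure (⋃ (i) (_ : ¬ σ i), P i) := by
    intro σ x hx
    obtain ⟨i, hσi, hxi⟩ := mem_iUnion₂.1 hx
    have hxZ : x ∈ Z := hPZ i hxi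
    set O : Set X := Hf i ∩ ⋂ j ∈ Finset.range i, (closure (Hf j))ᶜ with hO
    have hOopen : IsOpen O := ((hHo (f i))).inter
      (isOpen_biInter_finset (fun j _ => isClosed_closure.isOpen_compl))
    have hxO : x ∈ O := by
      refine ⟨hPH i hxi, ?_⟩
      apply mem_biInter
      intro j hj
      intro hxcl
      have : x ∈ Z ∩ Hf j := (c1 j) ▸ (⟨hxZ, hxcl⟩ : x ∈ Z ∩ closure (Hf j))
      exact hxi.2 (mem_iUnion₂.2 ⟨j, hj, this.2⟩)
    intro hxcl
    obtain ⟨y, hyO, hyM⟩ := mem_closure_iff.1 hxcl O hOopen hxO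
    obtain ⟨k, hσk, hyk⟩ := mem_iUnion₂.1 hyM
    have hki : k ≠ i := fun h => hσk (h ▸ hσi)
    rcases lt_or_gt_of_ne hki with hlt | hgt
    · exact (mem_iInter₂.1 hyO.2) k (Finset.mem_range.2 hlt) (subset_closure (hPH k hyk))
    · exact hyk.2 (mem_iUnion₂.2 ⟨i, Finset.mem_range.2 hgt, hyO.1⟩)
  have hclEF : closure E ∩ F = ∅ := by
    apply eq_empty_iff_forall_notMem.2
    rintro x ⟨hx1, hx2⟩
    exact key (fun i => ¬ goodU i) x hx2 (by
      convert hx1 using 3 with i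
      simp [not_not])
  have hclFE : closure F ∩ E = ∅ := by
    apply eq_empty_iff_forall_notMem.2
    rintro x ⟨hx1, hx2⟩
    exact key goodU x hx2 hx1
  have hclEB : closure E ∩ B = ∅ := by
    apply eq_empty_iff_forall_notMem.2
    rintro x ⟨hx1, hx2⟩
    obtain ⟨y, hyV, hyE⟩ := mem_closure_iff.1 hx1 V₀ hV₀ (hBV₀ hx2)
    exact eq_empty_iff_forall_notMem.1 hEV₀ y ⟨hyE, subset_closure hyV⟩
  have hclFA : closure F ∩ A = ∅ := by
    apply eq_empty_iff_forall_notMem.2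
    rintro x ⟨hx1, hx2⟩
    obtain ⟨y, hyU, hyF⟩ := mem_closure_iff.1 hx1 U₀ hU₀ (hAU₀ hx2)
    exact eq_empty_iff_forall_notMem.1 hFU₀ y ⟨hyF, subset_closure hyU⟩
  -- conclude
  have hsep1 : closure (A ∪ E) ∩ (B ∪ F) = ∅ := by
    rw [closure_union, hA.closure_eq]
    apply eq_empty_iff_forall_notMem.2
    rintro x ⟨hx1 | hx1, hx2 | hx2⟩
    · exact hAB.ne_of_mem hx1 hx2 rfl
    · exact eq_empty_iff_forall_notMem.1 hFU₀ x ⟨hx2, subset_closure (hAU₀ hx1)⟩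
    · exact eq_empty_iff_forall_notMem.1 hclEB x ⟨hx1, hx2⟩
    · exact eq_empty_iff_forall_notMem.1 hclEF x ⟨hx1, hx2⟩
  have hsep2 : (A ∪ E) ∩ closure (B ∪ F) = ∅ := by
    rw [closure_union, hB.closure_eq]
    apply eq_empty_iff_forall_notMem.2
    rintro x ⟨hx1 | hx1, hx2 | hx2⟩
    · exact hAB.ne_of_mem hx1 hx2 rfl
    · exact eq_empty_iff_forall_notMem.1 hclFA x ⟨hx2, hx1⟩
    · exact eq_empty_iff_forall_notMem.1 hEV₀ x ⟨hx1, subset_closure (hBV₀ hx2)⟩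
    · exact eq_empty_iff_forall_notMem.1 hclFE x ⟨hx2, hx1⟩
  obtain ⟨U, V, hU, hV, hSU, hSV, hUV⟩ := separated_disjoint_opens hsep1 hsep2
  exact ⟨U, V, hU, hV, hUV, (subset_union_left).trans hSU, (subset_union_left).trans hSV,
    fun x hx => (hZEF hx).elim (fun h => Or.inl (hSU (Or.inr h)))
      (fun h => Or.inr (hSV (Or.inr h)))⟩

end Metric2


section Space1
variable {Y : Type u} [MetricSpace Y] [SecondCountableTopology Y]

theorem zsum0_step {C : Set Y} (hCc : IsClosed C) (hCg : Good 1 C) {U V : Set Y}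
    (hU : IsOpen U) (hV : IsOpen V) (hcl : closure U ∩ closure V = ∅) :
    ∃ q : Set Y × Set Y, IsOpen q.1 ∧ IsOpen q.2 ∧ U ⊆ q.1 ∧ V ⊆ q.2 ∧
      closure q.1 ∩ closure q.2 = ∅ ∧ C ⊆ q.1 ∪ q.2 := by
  obtain ⟨G, G', hG, hG', hGG', hUG, hVG', hCcov⟩ := zsep hCg isClosed_closure
    isClosed_closure (disjoint_iff_inter_eq_empty.2 hcl)
  set E := C \ G' with hE
  set F := C \ G with hF
  have hEc : IsClosed E := hCc.sdiff hG'
  have hFc : IsClosed F := hCc.sdiff hG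
  have hK : Disjoint (closure U ∪ E) (closure V ∪ F) := by
    rw [disjoint_iff_inter_eq_empty]
    apply eq_empty_iff_forall_notMem.2
    rintro x ⟨hx1 | hx1, hx2 | hx2⟩
    · exact eq_empty_iff_forall_notMem.1 hcl x ⟨hx1, hx2⟩
    · exact hx2.2 (hUG hx1)
    · exact hx1.2 (hVG' hx2)
    · rcases hCcov hx1.1 with h | h
      · exact hx2.2 h
      · exact hx1.2 h
  obtain ⟨U', V', hU', hV', hKU, hKV, hUV'⟩ :=
    exists_opens_closure_disjoint (isClosed_closure.union hEc) (isClosed_closure.union hFc) hK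
  refine ⟨(U', V'), hU', hV', subset_closure.trans (subset_union_left.trans hKU),
    subset_closure.trans (subset_union_left.trans hKV), hUV', ?_⟩
  intro x hx
  rcases hCcov hx with h | h
  · exact Or.inl (hKU (Or.inr ⟨hx, fun h' => eq_empty_iff_forall_notMem.1 hGG' x ⟨h, h'⟩⟩))
  · exact Or.inr (hKV (Or.inr ⟨hx, fun h' => eq_empty_iff_forall_notMem.1 hGG' x ⟨h', h⟩⟩))

theorem zsum0 (C : ℕ → Set Y) (hC : ∀ i, IsClosed (C i)) (hCu : (⋃ i, C i) = univ)
    (hCg : ∀ i, Good 1 (C i)) {A B : Set Y} (hA : IsClosed A) (hB : IsClosed B)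
    (hAB : Disjoint A B) :
    ∃ U V : Set Y, IsOpen U ∧ IsOpen V ∧ U ∩ V = ∅ ∧ U ∪ V = univ ∧ A ⊆ U ∧ B ⊆ V := by
  obtain ⟨U₀, V₀, hU₀, hV₀, hA0, hB0, h0⟩ := exists_opens_closure_disjoint hA hB hAB
  let T := {p : Set Y × Set Y // IsOpen p.1 ∧ IsOpen p.2 ∧ closure p.1 ∩ closure p.2 = ∅}
  have hstep : ∀ (i : ℕ) (p : T), ∃ q : Set Y × Set Y, IsOpen q.1 ∧ IsOpen q.2 ∧
      p.1.1 ⊆ q.1 ∧ p.1.2 ⊆ q.2 ∧ closure q.1 ∩ closure q.2 = ∅ ∧ C i ⊆ q.1 ∪ q.2 :=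
    fun i p => zsum0_step (hC i) (hCg i) p.2.1 p.2.2.1 p.2.2.2
  let stepFun : ℕ → T → T := fun i p =>
    ⟨(hstep i p).choose, (hstep i p).choose_spec.1, (hstep i p).choose_spec.2.1,
      (hstep i p).choose_spec.2.2.2.2.1⟩
  let seq : ℕ → T := fun n => Nat.rec ⟨(U₀, V₀), hU₀, hV₀, h0⟩ (fun i p => stepFun i p) n
  have hseq : ∀ n, seq (n + 1) = stepFun n (seq n) := fun n => rfl
  have hsub : ∀ n, (seq n).1.1 ⊆ (seq (n + 1)).1.1 ∧ (seq n).1.2 ⊆ (seq (n + 1)).1.2 :=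
    fun n => ⟨(hstep n (seq n)).choose_spec.2.2.1, (hstep n (seq n)).choose_spec.2.2.2.1⟩
  have hmono : ∀ m n, m ≤ n → (seq m).1.1 ⊆ (seq n).1.1 ∧ (seq m).1.2 ⊆ (seq n).1.2 := by
    intro m n hmn
    induction n with
    | zero => rw [Nat.le_zero.1 hmn]; exact ⟨Subset.rfl, Subset.rfl⟩
    | succ k ih =>
      rcases Nat.lt_or_ge m (k+1) with h | h
      · have := ih (Nat.lt_succ_iff.1 h)
        exact ⟨this.1.trans (hsub k).1, this.2.trans (hsub k).2⟩
      · rw [Nat.le_antisymm hmn h]; exact ⟨Subset.rfl, Subset.rfl⟩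
  have hcov : ∀ i, C i ⊆ (seq (i + 1)).1.1 ∪ (seq (i + 1)).1.2 :=
    fun i => (hstep i (seq i)).choose_spec.2.2.2.2.2
  refine ⟨⋃ n, (seq n).1.1, ⋃ n, (seq n).1.2, isOpen_iUnion (fun n => (seq n).2.1),
    isOpen_iUnion (fun n => (seq n).2.2.1), ?_, ?_, ?_, ?_⟩
  · apply eq_empty_iff_forall_notMem.2
    rintro x ⟨hx1, hx2⟩
    obtain ⟨i, hi⟩ := mem_iUnion.1 hx1
    obtain ⟨j, hj⟩ := mem_iUnion.1 hx2
    have h1 : x ∈ (seq (max i j)).1.1 := (hmono i _ (le_max_left i j)).1 hi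
    have h2 : x ∈ (seq (max i j)).1.2 := (hmono j _ (le_max_right i j)).2 hj
    exact eq_empty_iff_forall_notMem.1 (seq (max i j)).2.2.2 x
      ⟨subset_closure h1, subset_closure h2⟩
  · apply Subset.antisymm (subset_univ _)
    intro x _
    obtain ⟨i, hi⟩ := mem_iUnion.1 (hCu ▸ (mem_univ x))
    rcases hcov i hi with h | h
    · exact Or.inl (mem_iUnion.2 ⟨i + 1, h⟩)
    · exact Or.inr (mem_iUnion.2 ⟨i + 1, h⟩)
  · exact fun x hx => mem_iUnion.2 ⟨0, hA0 hx⟩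
  · exact fun x hx => mem_iUnion.2 ⟨0, hB0 hx⟩

end Space1


theorem base_small_frontiers {Y : Type u} [MetricSpace Y] [SecondCountableTopology Y] {n : ℕ}
    (h : Good (n+1) (univ : Set Y)) :
    ∃ M : ℕ → Set Y, (∀ j, IsClosed (M j) ∧ Good n (M j)) ∧
      ∀ x, x ∉ (⋃ j, M j) → ∀ W : Set Y, IsOpen W → x ∈ W →
        ∃ H : Set Y, IsOpen H ∧ x ∈ H ∧ closure H ⊆ W ∧ frontier H ⊆ ⋃ j, M j := by
  classical
  set ℱ : Set (Set Y) := {H | IsOpen H ∧ Good n (frontier H)} with hℱ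
  have hbase : ∀ x (W : Set Y), IsOpen W → x ∈ W →
      ∃ H ∈ ℱ, x ∈ H ∧ closure H ⊆ W := by
    intro x W hW hxW
    obtain ⟨H, h1, h2, h3, h4⟩ := h x (mem_univ x) W hW hxW
    exact ⟨H, ⟨h1, by rwa [univ_inter] at h4⟩, h2, h3⟩
  set B := TopologicalSpace.countableBasis Y with hB
  have hBc : B.Countable := TopologicalSpace.countable_countableBasis Y
  haveI := hBc.to_subtype
  have hsb : ∀ b : ↥B, ∃ s : Set {H : Set Y // H ∈ ℱ ∧ H ⊆ b.1}, s.Countable ∧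
      ⋃ H ∈ s, H.1 = ⋃ H : {H : Set Y // H ∈ ℱ ∧ H ⊆ b.1}, H.1 :=
    fun b => TopologicalSpace.isOpen_iUnion_countable _ (fun H => H.2.1.1)
  choose s hsc hsU using hsb
  set 𝒰 : Set (Set Y) := ⋃ b : ↥B, Subtype.val '' (s b) with h𝒰
  have h𝒰c : 𝒰.Countable := countable_iUnion (fun b => ((hsc b).image _))
  have h𝒰ℱ : ∀ H ∈ 𝒰, H ∈ ℱ := by
    intro H hH
    obtain ⟨b, hb⟩ := mem_iUnion.1 hH
    obtain ⟨H', _, rfl⟩ := hb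
    exact H'.2.1
  set 𝒰' : Set (Set Y) := insert ∅ 𝒰 with h𝒰'
  obtain ⟨f, hf⟩ := Set.Countable.exists_eq_range (h𝒰c.insert ∅) ⟨∅, mem_insert _ _⟩
  set M : ℕ → Set Y := fun j => frontier (f j) with hM
  have hfm : ∀ j, f j ∈ 𝒰' := fun j => by rw [h𝒰', hf]; exact mem_range_self j
  refine ⟨M, ?_, ?_⟩
  · intro j
    refine ⟨isClosed_frontier, ?_⟩
    rcases hfm j with hj | hj
    · rw [hM]; simp only [hj, frontier_empty]; exact good_empty n
    · exact (h𝒰ℱ _ hj).2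
  · intro x hx W hW hxW
    obtain ⟨H₁, hH₁ℱ, hxH₁, hclH₁⟩ := hbase x W hW hxW
    obtain ⟨b, hbB, hxb, hbH₁⟩ := (TopologicalSpace.isBasis_countableBasis Y).exists_subset_of_mem_open hxH₁ hH₁ℱ.1
    obtain ⟨H₂, hH₂ℱ, hxH₂, hclH₂⟩ := hbase x b ((TopologicalSpace.isBasis_countableBasis Y).isOpen hbB) hxb
    have hx2 : x ∈ ⋃ H : {H : Set Y // H ∈ ℱ ∧ H ⊆ b}, H.1 :=
      mem_iUnion.2 ⟨⟨H₂, hH₂ℱ, subset_closure.trans hclH₂⟩, hxH₂⟩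
    rw [← hsU ⟨b, hbB⟩] at hx2
    obtain ⟨H₃, hH₃s, hxH₃⟩ := mem_iUnion₂.1 hx2
    have hH₃𝒰 : H₃.1 ∈ 𝒰 := mem_iUnion.2 ⟨⟨b, hbB⟩, mem_image_of_mem _ hH₃s⟩
    obtain ⟨j, hj⟩ := (hf ▸ (mem_insert_of_mem ∅ hH₃𝒰) : H₃.1 ∈ range f)
    refine ⟨H₃.1, H₃.2.1.1, hxH₃, ?_, ?_⟩
    · exact (closure_mono H₃.2.2).trans ((closure_mono hbH₁).trans hclH₁)
    · intro y hy
      exact mem_iUnion.2 ⟨j, by rw [hM]; simp only [hj]; exact hy⟩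


/-- A disjoint-open-sets separation yields a `Good`-style neighborhood. -/
theorem good_succ_of_sep {Y : Type u} [TopologicalSpace Y] {n : ℕ} {T : Set Y}
    (hT : Good n T) {x : Y} {Wt U V : Set Y} (hWt : Wtᶜ ⊆ V)
    (hU : IsOpen U) (hV : IsOpen V) (hUV : U ∩ V = ∅) (hxU : x ∈ U)
    (hTc : (U ∪ V)ᶜ ⊆ T) :
    ∃ H : Set Y, IsOpen H ∧ x ∈ H ∧ closure H ⊆ Wt ∧ Good n ((univ : Set Y) ∩ frontier H) := by
  have hclUV : closure U ∩ V = ∅ := by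
    apply eq_empty_iff_forall_notMem.2
    rintro y ⟨hy1, hy2⟩
    obtain ⟨z, hz1, hz2⟩ := mem_closure_iff.1 hy1 V hV hy2
    exact eq_empty_iff_forall_notMem.1 hUV z ⟨hz2, hz1⟩
  refine ⟨U, hU, hxU, ?_, ?_⟩
  · intro y hy
    by_contra hyW
    exact eq_empty_iff_forall_notMem.1 hclUV y ⟨hy, hWt hyW⟩
  · rw [univ_inter]
    refine hT.mono (fun y hy => hTc ?_)
    rintro (hyU | hyV)
    · exact hy.2 (by rw [hU.interior_eq]; exact hyU)
    · exact eq_empty_iff_forall_notMem.1 hclUV y ⟨hy.1, hyV⟩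

theorem good_sum : ∀ (n : ℕ) (Y : Type u) [MetricSpace Y] [SecondCountableTopology Y]
    (F : ℕ → Set Y), (∀ i, IsClosed (F i)) → (⋃ i, F i) = univ →
    (∀ i, Good (n+1) (F i)) → Good (n+1) (univ : Set Y)
  | 0, Y, _, _, F, hFc, hFu, hFg => by
      intro x _ Wt hWt hxWt
      have hdis : Disjoint ({x} : Set Y) Wtᶜ := by
        rw [disjoint_iff_inter_eq_empty]
        apply eq_empty_iff_forall_notMem.2
        rintro y ⟨rfl, hy2⟩
        exact hy2 hxWt
      obtain ⟨U, V, hU, hV, hUV, hUVu, hAU, hBV⟩ :=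
        zsum0 F hFc hFu hFg isClosed_singleton (isClosed_compl_iff.2 hWt) hdis
      have hcompl : (U ∪ V)ᶜ ⊆ (∅ : Set Y) := by rw [hUVu]; simp
      exact good_succ_of_sep (good_empty 0) hBV hU hV hUV (hAU rfl) hcompl
  | (n+1), Y, _, _, F, hFc, hFu, hFg => by
      -- decompose each piece inside its own subspace
      have hdec : ∀ i, ∃ M : ℕ → Set ↥(F i), (∀ j, IsClosed (M j) ∧ Good (n+1) (M j)) ∧
          ∀ x, x ∉ (⋃ j, M j) → ∀ W, IsOpen W → x ∈ W →
            ∃ H, IsOpen H ∧ x ∈ H ∧ closure H ⊆ W ∧ frontier H ⊆ ⋃ j, M j := by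
        intro i
        apply base_small_frontiers
        rw [good_subtype_iff, Subtype.coe_image_univ]
        exact hFg i
      choose M hM1 hM2 using hdec
      set Mc : ℕ × ℕ → Set Y := fun p => Subtype.val '' (M p.1 p.2) with hMc
      have hMcC : ∀ p, IsClosed (Mc p) := fun p =>
        ((hFc p.1).isClosedEmbedding_subtypeVal.isClosedMap _ ((hM1 p.1 p.2).1))
      have hMcG : ∀ p, Good (n+1) (Mc p) := fun p => good_subtype_iff.1 (hM1 p.1 p.2).2
      have hMcF : ∀ p, Mc p ⊆ F p.1 := by
        rintro p _ ⟨a, _, rfl⟩; exact a.2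
      set W : Set Y := ⋃ p : ℕ × ℕ, Mc p with hW
      have hMcW : ∀ p, Mc p ⊆ W := fun p => subset_iUnion Mc p
      -- Good (n+1) W via the inductive hypothesis on the subspace ↥W
      have hWgood : Good (n+1) W := by
        have e : ℕ ≃ ℕ × ℕ := (Denumerable.eqv (ℕ × ℕ)).symm
        have hcov : (⋃ k, (Subtype.val ⁻¹' (Mc (e k)) : Set ↥W)) = univ := by
          apply eq_univ_of_forall
          intro z
          obtain ⟨p, hp⟩ := mem_iUnion.1 z.2
          exact mem_iUnion.2 ⟨e.symm p, by simp only [Equiv.apply_symm_apply]; exact hp⟩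
        have hgood : ∀ k, Good (n+1) ((Subtype.val ⁻¹' (Mc (e k)) : Set ↥W)) := by
          intro k
          rw [good_subtype_iff, Subtype.image_preimage_coe]
          exact (hMcG (e k)).mono inter_subset_right
        have := good_sum n ↥W (fun k => Subtype.val ⁻¹' (Mc (e k)))
          (fun k => (hMcC (e k)).preimage continuous_subtype_val) hcov hgood
        have h2 := good_subtype_iff.1 this
        rwa [Subtype.coe_image_univ] at h2
      set Zc : Set Y := Wᶜ with hZc
      -- each trace Zc ∩ F i is relatively zero-dimensional
      have htrace : ∀ i, Good 1 (Zc ∩ F i) := by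
        intro i
        intro x hx Wt hWt hxWt
        have hx' : (⟨x, hx.2⟩ : ↥(F i)) ∉ ⋃ j, M i j := by
          intro hmem
          obtain ⟨j, hj⟩ := mem_iUnion.1 hmem
          exact hx.1 (hMcW (i, j) ⟨_, hj, rfl⟩)
        obtain ⟨ε, hε, hball⟩ := Metric.isOpen_iff.1 hWt x hxWt
        set Bl := Metric.ball x (ε/2) with hBl
        have hclBl : closure Bl ⊆ Wt := by
          refine (Metric.closure_ball_subset_closedBall.trans ?_).trans hball
          exact Metric.closedBall_subset_ball (by linarith)
        obtain ⟨H₀, hH₀o, hxH₀, hclH₀, hfrH₀⟩ := hM2 i ⟨x, hx.2⟩ hx'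
          (Subtype.val ⁻¹' Bl) (Metric.isOpen_ball.preimage continuous_subtype_val)
          (Metric.mem_ball_self (by linarith))
        obtain ⟨G₀, hG₀, hG₀H⟩ := isOpen_induced_iff.1 hH₀o
        set S : Set Y := Subtype.val '' H₀ with hS
        have hSG : S = F i ∩ G₀ := by rw [hS, ← hG₀H, Subtype.image_preimage_coe]
        have hxS : x ∈ S := ⟨⟨x, hx.2⟩, hxH₀, rfl⟩
        have hSBl : S ⊆ Bl := by
          rintro _ ⟨a, ha, rfl⟩
          exact hclH₀ (subset_closure ha)
        obtain ⟨H, hHo, hxH, hHBl, hfr⟩ := transfer_open hG₀ hSG hxS Metric.isOpen_ball hSBl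
        have hkey : (F i ∩ closure S) \ S ⊆ W := by
          rintro y ⟨⟨hy1, hy2⟩, hy3⟩
          have hy' : (⟨y, hy1⟩ : ↥(F i)) ∈ closure H₀ := closure_subtype.2 hy2
          have hyn : (⟨y, hy1⟩ : ↥(F i)) ∉ H₀ := fun hmem => hy3 ⟨_, hmem, rfl⟩
          have : (⟨y, hy1⟩ : ↥(F i)) ∈ frontier H₀ :=
            ⟨hy', fun hmem => hyn (interior_subset hmem)⟩
          obtain ⟨j, hj⟩ := mem_iUnion.1 (hfrH₀ this)
          exact hMcW (i, j) ⟨_, hj, rfl⟩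
        refine ⟨H, hHo, hxH, (closure_mono hHBl).trans hclBl, ?_⟩
        show (Zc ∩ F i) ∩ frontier H = ∅
        apply eq_empty_iff_forall_notMem.2
        rintro y ⟨⟨hyZ, hyF⟩, hyfr⟩
        exact hyZ (hkey (hfr ⟨hyF, hyfr⟩))
      -- Zc is zero-dimensional via zsum0 in the subspace ↥Zc
      have hZcg : Good 1 Zc := by
        apply good_of_indLt
        intro p V hV hpV
        obtain ⟨W₀, hW₀, hW₀V⟩ := isOpen_induced_iff.1 hV
        have hdis : Disjoint ({p} : Set ↥Zc) Vᶜ := by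
          rw [disjoint_iff_inter_eq_empty]
          apply eq_empty_iff_forall_notMem.2
          rintro y ⟨rfl, hy2⟩
          exact hy2 hpV
        obtain ⟨U', V', hU', hV', hUV', hUVu', hpU', hVV'⟩ := zsum0
          (fun i => (Subtype.val ⁻¹' (F i) : Set ↥Zc))
          (fun i => (hFc i).preimage continuous_subtype_val)
          (by
            apply eq_univ_of_forall
            intro z
            have := hFu ▸ (mem_univ z.1)
            obtain ⟨i, hi⟩ := mem_iUnion.1 (this : z.1 ∈ ⋃ i, F i)
            exact mem_iUnion.2 ⟨i, hi⟩)
          (fun i => by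
            rw [good_subtype_iff, Subtype.image_preimage_coe]
            exact htrace i)
          isClosed_singleton (hV.isClosed_compl) hdis
        refine ⟨U', hU', hpU' rfl, ?_, ?_⟩
        · intro y hy
          by_contra hyV
          exact eq_empty_iff_forall_notMem.1 hUV' y ⟨hy, hVV' hyV⟩
        · have hUc : U' = V'ᶜ := by
            apply Subset.antisymm
            · intro y hy hy2
              exact eq_empty_iff_forall_notMem.1 hUV' y ⟨hy, hy2⟩
            · intro y hy
              rcases (eq_univ_iff_forall.1 hUVu' y) with h | h
              · exact h
              · exact absurd h hy
          have hfr : frontier U' = ∅ := by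
            refine IsClopen.frontier_eq ⟨?_, hU'⟩
            rw [hUc]; exact hV'.isClosed_compl
          simp only [IndLt]
          exact Set.isEmpty_coe_sort.2 hfr
      -- conclude
      intro x _ Wt hWt hxWt
      have hdis : Disjoint ({x} : Set Y) Wtᶜ := by
        rw [disjoint_iff_inter_eq_empty]
        apply eq_empty_iff_forall_notMem.2
        rintro y ⟨rfl, hy2⟩
        exact hy2 hxWt
      obtain ⟨U, V, hU, hV, hUV, hxU, hWtV, hZcUV⟩ :=
        zsep hZcg isClosed_singleton hWt.isClosed_compl hdis
      have hcompl : (U ∪ V)ᶜ ⊆ W := by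
        intro y hy
        by_contra hyW
        exact hy (hZcUV hyW)
      exact good_succ_of_sep hWgood hWtV hU hV hUV (hxU rfl) hcompl


/-- If every pair of distinct points of a metric space `X` can be separated by a closed
set `L` with `ind L ≤ D - 1`, then every compact subset of `X` has `ind ≤ D`. -/
theorem compact_subset_ind_le_of_separators {X : Type u} [MetricSpace X] (D : ℕ)
    (hsep : ∀ x y : X, x ≠ y → ∃ L : Set X, SeparatesPoints L x y ∧ IndLt D ↥L) :
    ∀ K : Set X, IsCompact K → IndLt (D + 1) ↥K := by
  intro K hK
  intro p V hV hpV
  obtain ⟨W₀, hW₀, hW₀V⟩ := isOpen_induced_iff.1 hV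
  have hpW₀ : p.1 ∈ W₀ := by rw [← hW₀V] at hpV; exact hpV
  set C : Set X := K ∩ W₀ᶜ with hC
  have hCcomp : IsCompact C := hK.inter_right (isClosed_compl_iff.2 hW₀)
  have hsel : ∀ y : ↥C, ∃ q : Set X × Set X × Set X, IsClosed q.1 ∧ IsOpen q.2.1 ∧
      IsOpen q.2.2 ∧ p.1 ∈ q.2.1 ∧ y.1 ∈ q.2.2 ∧ q.2.1 ∩ q.2.2 = ∅ ∧
      q.2.1 ∪ q.2.2 = q.1ᶜ ∧ IndLt D ↥q.1 := by
    intro y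
    have hne : p.1 ≠ y.1 := fun h => y.2.2 (h ▸ hpW₀)
    obtain ⟨L, ⟨hLc, U', V', h1, h2, h3, h4, h5, h6⟩, hLind⟩ := hsep p.1 y.1 hne
    exact ⟨(L, U', V'), hLc, h1, h2, h3, h4, h5, h6, hLind⟩
  choose q hLc hUo hVo hpU hyV hUV hUVL hLind using hsel
  set L : ↥C → Set X := fun y => (q y).1 with hLdef
  set Uy : ↥C → Set X := fun y => (q y).2.1 with hUydef
  set Vy : ↥C → Set X := fun y => (q y).2.2 with hVydef
  have hcov : C ⊆ ⋃ y : ↥C, Vy y := fun z hz => mem_iUnion.2 ⟨⟨z, hz⟩, hyV _⟩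
  obtain ⟨t, ht⟩ := hCcomp.elim_finite_subcover Vy hVo hcov
  set Uamb : Set X := (⋂ y ∈ t, Uy y) ∩ W₀ with hUamb
  have hUambO : IsOpen Uamb := (isOpen_biInter_finset (fun y _ => hUo y)).inter hW₀
  have hpUamb : p.1 ∈ Uamb := ⟨mem_biInter (fun y _ => hpU y), hpW₀⟩
  set U : Set ↥K := Subtype.val ⁻¹' Uamb with hUdef
  have hUopen : IsOpen U := hUambO.preimage continuous_subtype_val
  refine ⟨U, hUopen, hpUamb, ?_, ?_⟩
  · rw [← hW₀V]; exact fun z hz => hz.2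
  · -- the frontier of U is covered by the traces of finitely many separators
    have hfr : ∀ z : ↥K, z ∈ frontier U → ∃ y ∈ t, z.1 ∈ L y := by
      intro z hz
      have hzim : Subtype.val '' U = K ∩ Uamb := Subtype.image_preimage_coe K Uamb
      have hzcl : z.1 ∈ closure (K ∩ Uamb) := by
        have := closure_subtype.1 hz.1
        rwa [hzim] at this
      have hznU : z.1 ∉ Uamb := fun h => hz.2 (by rw [hUopen.interior_eq]; exact h)
      have hmeet : ∀ O : Set X, IsOpen O → z.1 ∈ O → (O ∩ (K ∩ Uamb)).Nonempty := by
        intro O hO hzO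
        obtain ⟨w, hw1, hw2⟩ := mem_closure_iff.1 hzcl O hO hzO
        exact ⟨w, hw1, hw2⟩
      have hnotV : ∀ y ∈ t, z.1 ∉ Vy y := by
        intro y _ hzV
        obtain ⟨w, hwV, hwK, hwU⟩ := hmeet (Vy y) (hVo y) hzV
        have hwUy : w ∈ Uy y := by
          have := hwU.1
          exact (mem_iInter₂.1 this) y (by assumption)
        exact eq_empty_iff_forall_notMem.1 (hUV y) w ⟨hwUy, hwV⟩
      by_cases hzW : z.1 ∈ W₀
      · have : ∃ y ∈ t, z.1 ∉ Uy y := by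
          by_contra hcon
          push_neg at hcon
          exact hznU ⟨mem_biInter hcon, hzW⟩
        obtain ⟨y, hyt, hznUy⟩ := this
        refine ⟨y, hyt, ?_⟩
        by_contra hzL
        have : z.1 ∈ Uy y ∪ Vy y := by rw [hUVL y]; exact hzL
        rcases this with h | h
        · exact hznUy h
        · exact hnotV y hyt h
      · have hzC : z.1 ∈ C := ⟨z.2, hzW⟩
        obtain ⟨y, hyt, hzV⟩ := mem_iUnion₂.1 (ht hzC)
        exact absurd hzV (hnotV y hyt)
    set Bs : Set X := Subtype.val '' (frontier U) with hBs
    have hBsub : Bs ⊆ ⋃ y ∈ t, L y := by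
      rintro _ ⟨z, hz, rfl⟩
      obtain ⟨y, hyt, hzL⟩ := hfr z hz
      exact mem_iUnion₂.2 ⟨y, hyt, hzL⟩
    haveI : CompactSpace ↥K := isCompact_iff_compactSpace.1 hK
    have hBcomp : IsCompact Bs := (isClosed_frontier.isCompact).image continuous_subtype_val
    haveI : CompactSpace ↥Bs := isCompact_iff_compactSpace.1 hBcomp
    haveI : SecondCountableTopology ↥Bs := inferInstance
    have hBgood : Good D Bs := by
      cases D with
      | zero =>
        have hBe : Bs = ∅ := by
          apply eq_empty_iff_forall_notMem.2
          intro b hb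
          obtain ⟨y, hyt, hbL⟩ := mem_iUnion₂.1 (hBsub hb)
          have he : IsEmpty ↥(L y) := by
            have := hLind y
            simpa only [IndLt] using this
          rw [Set.isEmpty_coe_sort] at he
          rw [he] at hbL
          exact hbL
        show Good 0 Bs
        simpa only [Good] using hBe
      | succ n =>
        set lt := t.toList with hlt
        set Fk : ℕ → Set ↥Bs := fun k =>
          if h : k < lt.length then Subtype.val ⁻¹' (L (lt.get ⟨k, h⟩)) else ∅ with hFk
        have hFkeq : ∀ k, Fk k =
            if h : k < lt.length then Subtype.val ⁻¹' (L (lt.get ⟨k, h⟩)) else ∅ :=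
          fun k => rfl
        have hFkC : ∀ k, IsClosed (Fk k) := by
          intro k
          rw [hFkeq]
          by_cases h : k < lt.length
          · rw [dif_pos h]; exact (hLc _).preimage continuous_subtype_val
          · rw [dif_neg h]; exact isClosed_empty
        have hFkU : (⋃ k, Fk k) = univ := by
          apply eq_univ_of_forall
          intro z
          obtain ⟨y, hyt, hzL⟩ := mem_iUnion₂.1 (hBsub z.2)
          have hymem : y ∈ lt := Finset.mem_toList.2 hyt
          obtain ⟨k, hkeq⟩ := List.mem_iff_get.1 hymem
          refine mem_iUnion.2 ⟨k.1, ?_⟩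
          rw [hFkeq, dif_pos k.2]
          show z.1 ∈ L (lt.get ⟨k.1, k.2⟩)
          rw [Fin.eta, hkeq]
          exact hzL
        have hFkG : ∀ k, Good (n+1) (Fk k) := by
          intro k
          rw [hFkeq]
          by_cases h : k < lt.length
          · rw [dif_pos h]
            rw [good_subtype_iff, Subtype.image_preimage_coe]
            exact (good_of_indLt (n+1) _ (hLind _)).mono inter_subset_right
          · rw [dif_neg h]; exact good_empty (n+1)
        have := good_sum n ↥Bs Fk hFkC hFkU hFkG
        have h2 := good_subtype_iff.1 this
        rwa [Subtype.coe_image_univ] at h2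
    exact indLt_image_val_iff.1 (indLt_of_good D hBgood)
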